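/- arXiv:2005.05851 — 2 statements merged into one kernel-verified Lean document; each statement's English description precedes it below -/
import Mathlib

section
/- Let G ∈ R^{n×n}, p ∈ R^n nonzero, y = Gp, and suppose the symmetric part G_S of G is positive definite. Then β₁ = (pᵀp)/(pᵀy) and β₂ = (pᵀy)/(yᵀy) are positive and satisfy 1/λ_max(G_S) ≤ β₁ ≤ 1/λ_min(G_S) and λ_min(G_S)/λ_max(GᵀG) ≤ β₂ ≤ λ_max(G_S)/λ_min(GᵀG). -/
/-!
The quadratic form of `G` only sees its symmetric part, `pᵀ G p = pᵀ G_S p`, and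
`yᵀ y = pᵀ (Gᵀ G) p`. By the Rayleigh bounds `λ_min(A) pᵀp ≤ pᵀ A p ≤ λ_max(A) pᵀp` for
`A = G_S` and `A = Gᵀ G`, both `β₁` and `β₂` are ratios of quantities squeezed between
eigenvalue multiples of `pᵀp`. Positivity of `G_S` makes `pᵀ G p > 0`, hence `G` injective
and `Gᵀ G` positive definite, so every eigenvalue in a denominator is positive.
The Rayleigh bounds hold because `A - λ_min • 1` and `λ_max • 1 - A` have nonnegative
spectrum, a shift of that of `A`.
-/

open Matrix

namespace Matrix

variable {ι : Type*} [Fintype ι]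

section Spectrum

variable [DecidableEq ι] {A : Matrix ι ι ℝ}

lemma IsHermitian.posSemidef_sub_smul_one (hA : A.IsHermitian) {c : ℝ}
    (hc : ∀ i, c ≤ hA.eigenvalues i) : (A - c • 1).PosSemidef := by
  refine posSemidef_iff_isHermitian_and_spectrum_nonneg.2
    ⟨hA.sub (isHermitian_one.smul (.all c)), ?_⟩
  rw [← Algebra.algebraMap_eq_smul_one, ← spectrum.sub_singleton_eq,
    hA.spectrum_real_eq_range_eigenvalues]
  rintro _ ⟨_, ⟨i, rfl⟩, _, rfl, rfl⟩
  exact sub_nonneg.2 (hc i)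

lemma IsHermitian.posSemidef_smul_one_sub (hA : A.IsHermitian) {c : ℝ}
    (hc : ∀ i, hA.eigenvalues i ≤ c) : (c • 1 - A).PosSemidef := by
  refine posSemidef_iff_isHermitian_and_spectrum_nonneg.2
    ⟨(isHermitian_one.smul (.all c)).sub hA, ?_⟩
  rw [← Algebra.algebraMap_eq_smul_one, ← spectrum.singleton_sub_eq,
    hA.spectrum_real_eq_range_eigenvalues]
  rintro _ ⟨_, rfl, _, ⟨i, rfl⟩, rfl⟩
  exact sub_nonneg.2 (hc i)

lemma IsHermitian.iInf_eigenvalues_mul_dotProduct_self_le (hA : A.IsHermitian) (x : ι → ℝ) :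
    (⨅ i, hA.eigenvalues i) * (x ⬝ᵥ x) ≤ x ⬝ᵥ A *ᵥ x := by
  have := (hA.posSemidef_sub_smul_one fun i ↦ ciInf_le (Finite.bddBelow_range _) i
    ).dotProduct_mulVec_nonneg x
  simpa [sub_mulVec, smul_mulVec, dotProduct_sub, dotProduct_smul] using this

lemma IsHermitian.dotProduct_mulVec_le_iSup_eigenvalues_mul (hA : A.IsHermitian) (x : ι → ℝ) :
    x ⬝ᵥ A *ᵥ x ≤ (⨆ i, hA.eigenvalues i) * (x ⬝ᵥ x) := by
  have := (hA.posSemidef_smul_one_sub fun i ↦ le_ciSup (Finite.bddAbove_range _) i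
    ).dotProduct_mulVec_nonneg x
  simpa [sub_mulVec, smul_mulVec, dotProduct_sub, dotProduct_smul] using this

lemma PosDef.iInf_eigenvalues_pos [Nonempty ι] (hA : A.PosDef) :
    0 < ⨅ i, hA.1.eigenvalues i := by
  obtain ⟨i, hi⟩ := exists_eq_ciInf_of_finite (f := hA.1.eigenvalues)
  exact hi ▸ hA.eigenvalues_pos i

lemma PosDef.iSup_eigenvalues_pos [Nonempty ι] (hA : A.PosDef) :
    0 < ⨆ i, hA.1.eigenvalues i :=
  hA.iInf_eigenvalues_pos.trans_le <|
    ciInf_le_ciSup (Finite.bddBelow_range _) (Finite.bddAbove_range _)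

end Spectrum

lemma dotProduct_mulVec_symmPart {K : Type*} [Field K] [CharZero K] (G : Matrix ι ι K)
    (x : ι → K) :
    x ⬝ᵥ ((1 / 2 : K) • (G + Gᵀ)) *ᵥ x = x ⬝ᵥ G *ᵥ x := by
  rw [smul_mulVec, add_mulVec, dotProduct_smul, dotProduct_add, mulVec_transpose,
    dotProduct_comm x (x ᵥ* G), ← dotProduct_mulVec, smul_eq_mul]
  ring

lemma dotProduct_mulVec_transpose_mul_self {m R : Type*} [Fintype m] [CommSemiring R]
    (G : Matrix m ι R) (x : ι → R) : x ⬝ᵥ (Gᵀ * G) *ᵥ x = G *ᵥ x ⬝ᵥ G *ᵥ x := by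
  rw [← mulVec_mulVec, dotProduct_mulVec, vecMul_transpose]

section SymmPart

variable {G : Matrix ι ι ℝ}

lemma PosDef.dotProduct_mulVec_pos_of_symmPart (hG : ((1 / 2 : ℝ) • (G + Gᵀ)).PosDef)
    {x : ι → ℝ} (hx : x ≠ 0) : 0 < x ⬝ᵥ G *ᵥ x := by
  simpa only [star_trivial, dotProduct_mulVec_symmPart] using hG.dotProduct_mulVec_pos hx

lemma PosDef.mulVec_injective_of_symmPart (hG : ((1 / 2 : ℝ) • (G + Gᵀ)).PosDef) :
    Function.Injective G.mulVec := by
  intro x y hxy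
  by_contra hne
  have := hG.dotProduct_mulVec_pos_of_symmPart (sub_ne_zero.2 hne)
  rw [mulVec_sub, hxy, sub_self, dotProduct_zero] at this
  exact this.false

lemma PosDef.transpose_mul_self_of_symmPart (hG : ((1 / 2 : ℝ) • (G + Gᵀ)).PosDef) :
    (Gᵀ * G).PosDef := by
  simpa using PosDef.conjTranspose_mul_self G hG.mulVec_injective_of_symmPart

end SymmPart

end Matrix

theorem stmt_7_general {n : ℕ} (G : Matrix (Fin n) (Fin n) ℝ)
    (hGS : (((1/2 : ℝ) • (G + Gᵀ))).PosDef)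
    (hGtG : (Gᵀ * G).IsHermitian)
    (p : Fin n → ℝ) (hp : p ≠ 0) :
    0 < (p ⬝ᵥ p) / (p ⬝ᵥ G.mulVec p) ∧
    0 < (p ⬝ᵥ G.mulVec p) / (G.mulVec p ⬝ᵥ G.mulVec p) ∧
    1 / (⨆ i, hGS.1.eigenvalues i) ≤ (p ⬝ᵥ p) / (p ⬝ᵥ G.mulVec p) ∧
    (p ⬝ᵥ p) / (p ⬝ᵥ G.mulVec p) ≤ 1 / (⨅ i, hGS.1.eigenvalues i) ∧
    (⨅ i, hGS.1.eigenvalues i) / (⨆ i, hGtG.eigenvalues i) ≤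
        (p ⬝ᵥ G.mulVec p) / (G.mulVec p ⬝ᵥ G.mulVec p) ∧
    (p ⬝ᵥ G.mulVec p) / (G.mulVec p ⬝ᵥ G.mulVec p) ≤
        (⨆ i, hGS.1.eigenvalues i) / (⨅ i, hGtG.eigenvalues i) := by
  have : Nonempty (Fin n) := ⟨(Function.ne_iff.1 hp).choose⟩
  have hGtG_pos : (Gᵀ * G).PosDef := hGS.transpose_mul_self_of_symmPart
  have ha : 0 < p ⬝ᵥ p := by simpa using dotProduct_star_self_pos_iff.2 hp
  have hb : 0 < p ⬝ᵥ G *ᵥ p := hGS.dotProduct_mulVec_pos_of_symmPart hp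
  have hc : 0 < G *ᵥ p ⬝ᵥ G *ᵥ p := by
    simpa [dotProduct_mulVec_transpose_mul_self] using hGtG_pos.dotProduct_mulVec_pos hp
  have hm : 0 < ⨅ i, hGS.1.eigenvalues i := hGS.iInf_eigenvalues_pos
  have hM : 0 < ⨆ i, hGS.1.eigenvalues i := hGS.iSup_eigenvalues_pos
  have hμ : 0 < ⨅ i, hGtG.eigenvalues i := hGtG_pos.iInf_eigenvalues_pos
  have hK : 0 < ⨆ i, hGtG.eigenvalues i := hGtG_pos.iSup_eigenvalues_pos
  have hb_lo := hGS.1.iInf_eigenvalues_mul_dotProduct_self_le p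
  have hb_hi := hGS.1.dotProduct_mulVec_le_iSup_eigenvalues_mul p
  have hc_lo := hGtG.iInf_eigenvalues_mul_dotProduct_self_le p
  have hc_hi := hGtG.dotProduct_mulVec_le_iSup_eigenvalues_mul p
  rw [dotProduct_mulVec_symmPart] at hb_lo hb_hi
  rw [dotProduct_mulVec_transpose_mul_self] at hc_lo hc_hi
  refine ⟨div_pos ha hb, div_pos hb hc, ?_, ?_, ?_, ?_⟩
  · rw [div_le_div_iff₀ hM hb]; linarith
  · rw [div_le_div_iff₀ hb hm]; linarith
  · rw [div_le_div_iff₀ hK hc]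
    nlinarith [mul_le_mul_of_nonneg_left hc_hi hm.le, mul_le_mul_of_nonneg_left hb_lo hK.le]
  · rw [div_le_div_iff₀ hc hμ]
    nlinarith [mul_le_mul_of_nonneg_left hb_hi hμ.le, mul_le_mul_of_nonneg_left hc_lo hM.le]

theorem stmt_7 {n : ℕ} (hn : 0 < n) (G : Matrix (Fin n) (Fin n) ℝ)
    (hGS : (((1/2 : ℝ) • (G + Gᵀ))).PosDef)
    (hGtG : (Gᵀ * G).IsHermitian)
    (p : Fin n → ℝ) (hp : p ≠ 0) :
    0 < (p ⬝ᵥ p) / (p ⬝ᵥ G.mulVec p) ∧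
    0 < (p ⬝ᵥ G.mulVec p) / (G.mulVec p ⬝ᵥ G.mulVec p) ∧
    1 / (⨆ i, hGS.1.eigenvalues i) ≤ (p ⬝ᵥ p) / (p ⬝ᵥ G.mulVec p) ∧
    (p ⬝ᵥ p) / (p ⬝ᵥ G.mulVec p) ≤ 1 / (⨅ i, hGS.1.eigenvalues i) ∧
    (⨅ i, hGS.1.eigenvalues i) / (⨆ i, hGtG.eigenvalues i) ≤
        (p ⬝ᵥ G.mulVec p) / (G.mulVec p ⬝ᵥ G.mulVec p) ∧
    (p ⬝ᵥ G.mulVec p) / (G.mulVec p ⬝ᵥ G.mulVec p) ≤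
        (⨆ i, hGS.1.eigenvalues i) / (⨅ i, hGtG.eigenvalues i) :=
  stmt_7_general G hGS hGtG p hp
end

section
/- Let F ∈ R^n be nonzero, G ∈ R^{n×n} with GF ≠ 0, γ ∈ (0,1], β ∈ R, and F' = (I − γβG)F. If β·q(G_S, F) > 0 and γ|β| < 2|q(G_S, F)|/q(GᵀG, F), then ‖F'‖ < ‖F‖. -/
open Matrix

theorem stmt_16 {n : ℕ} (F : Fin n → ℝ) (hF : F ≠ 0)
    (G : Matrix (Fin n) (Fin n) ℝ) (hGF : G.mulVec F ≠ 0)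
    (hFGF : F ⬝ᵥ G.mulVec F ≠ 0)
    (γ β : ℝ) (hγ0 : 0 < γ) (hγ1 : γ ≤ 1)
    (hsign : 0 < β * ((F ⬝ᵥ (((1/2 : ℝ) • (G + Gᵀ)).mulVec F)) / (F ⬝ᵥ F)))
    (hstep : γ * |β| <
      2 * |(F ⬝ᵥ (((1/2 : ℝ) • (G + Gᵀ)).mulVec F)) / (F ⬝ᵥ F)| /
        ((F ⬝ᵥ (Gᵀ * G).mulVec F) / (F ⬝ᵥ F))) :
    Real.sqrt ((F - (γ * β) • G.mulVec F) ⬝ᵥ (F - (γ * β) • G.mulVec F)) <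
      Real.sqrt (F ⬝ᵥ F) := by
  set s := F ⬝ᵥ G.mulVec F with hs
  set N := F ⬝ᵥ F with hNdef
  set P := (G.mulVec F) ⬝ᵥ (G.mulVec F) with hPdef
  have hN : 0 < N := lt_of_le_of_ne
    (by simp only [hNdef, dotProduct]
        exact Finset.sum_nonneg fun i _ => mul_self_nonneg _)
    (fun h => hF (dotProduct_self_eq_zero.mp h.symm))
  have hP : 0 < P := lt_of_le_of_ne
    (by simp only [hPdef, dotProduct]
        exact Finset.sum_nonneg fun i _ => mul_self_nonneg _)
    (fun h => hGF (dotProduct_self_eq_zero.mp h.symm))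
  have hsym : F ⬝ᵥ (((1/2 : ℝ) • (G + Gᵀ)).mulVec F) = s := by
    have h1 : F ⬝ᵥ Gᵀ.mulVec F = s := by
      rw [hs, Matrix.dotProduct_mulVec F G F, ← Matrix.mulVec_transpose,
        dotProduct_comm]
    rw [Matrix.smul_mulVec, Matrix.add_mulVec, dotProduct_smul,
      dotProduct_add, h1, hs]
    simp [smul_eq_mul]
    ring
  have hPP : F ⬝ᵥ (Gᵀ * G).mulVec F = P := by
    rw [← Matrix.mulVec_mulVec, Matrix.dotProduct_mulVec F Gᵀ,
      Matrix.vecMul_transpose, hPdef]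
  rw [hsym] at hsign hstep
  rw [hPP] at hstep
  have hβs : 0 < β * s := by
    have : β * (s / N) = (β * s) / N := by ring
    rw [this] at hsign
    exact (div_pos_iff.mp hsign).resolve_right (fun h => absurd h.2 (not_lt.mpr hN.le)) |>.1
  have hstep' : γ * |β| < 2 * |s| / P := by
    have : 2 * |s / N| / (P / N) = 2 * |s| / P := by
      rw [abs_div, abs_of_pos hN]
      field_simp
    rwa [this] at hstep
  have habs : |β| * |s| = β * s := by
    rw [← abs_mul, abs_of_pos hβs]
  have hkey : γ * γ * β * β * P < 2 * γ * (β * s) := by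
    have h1 : γ * |β| * P < 2 * |s| := by
      rw [lt_div_iff₀ hP] at hstep'
      linarith
    have h2 : γ * |β| * (γ * |β| * P) < γ * |β| * (2 * |s|) := by
      have hβ0 : β ≠ 0 := fun h => by simp [h] at hβs
      have : 0 < γ * |β| := mul_pos hγ0 (abs_pos.mpr hβ0)
      exact mul_lt_mul_of_pos_left h1 this
    have hb2 : |β| * |β| = β * β := by rw [← abs_mul, abs_mul_self]
    have h3 : γ * |β| * (γ * |β| * P) = γ * γ * β * β * P := by
      have e : γ * |β| * (γ * |β| * P) = |β| * |β| * (γ * γ * P) := by ring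
      rw [e, hb2]; ring
    have h4 : γ * |β| * (2 * |s|) = 2 * γ * (β * s) := by
      have e : γ * |β| * (2 * |s|) = 2 * γ * (|β| * |s|) := by ring
      rw [e, habs]
    linarith
  have hexp : (F - (γ * β) • G.mulVec F) ⬝ᵥ (F - (γ * β) • G.mulVec F)
      = N - 2 * γ * (β * s) + γ * γ * β * β * P := by
    rw [sub_dotProduct, dotProduct_sub, dotProduct_sub, smul_dotProduct,
      dotProduct_smul, smul_dotProduct, dotProduct_smul,
      dotProduct_comm (G.mulVec F) F]
    simp only [smul_eq_mul, ← hs, ← hNdef, ← hPdef]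
    ring
  rw [hexp]
  apply Real.sqrt_lt_sqrt
  · rw [← hexp]
    exact Finset.sum_nonneg fun i _ => mul_self_nonneg _
  · linarith
end
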